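/- Let N ≥ 1, let β ∈ ℝ, and set α = (4β − 1)/4. Suppose f : EuclideanSpace ℝ (Fin N) → ℝ is C^∞ and satisfies f(y)²·Δ²(f³)(y) − β·⟨y, ∇f(y)⟩ + α·f(y) = 0 for every y. Then the function ρ(x,t) = t^α · f(t^(−β)·x) satisfies ∂ₜρ(x,t) + ρ(x,t)²·Δ²((ρ(·,t))³)(x) = 0 for every x ∈ EuclideanSpace ℝ (Fin N) and every t > 0. -/

import Mathlib

open RealInnerProductSpace

/-- The Laplacian `Δu(x) = ∑ i, ∂²u/∂xᵢ²(x)` of `u : ℝ^N → ℝ`. -/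
noncomputable def lap {N : ℕ} (u : EuclideanSpace ℝ (Fin N) → ℝ)
    (x : EuclideanSpace ℝ (Fin N)) : ℝ :=
  ∑ i : Fin N, fderiv ℝ (fun y => fderiv ℝ u y (EuclideanSpace.single i 1)) x
    (EuclideanSpace.single i 1)

variable {N : ℕ}
local notation "E" => EuclideanSpace ℝ (Fin N)

lemma contDiff_dapply (u : E → ℝ) (hu : ContDiff ℝ (⊤ : ℕ∞) u) (v : E) :
    ContDiff ℝ (⊤ : ℕ∞) (fun y => fderiv ℝ u y v) :=
  (hu.fderiv_right (by simp)).clm_apply contDiff_const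

lemma fderiv_scale (u : E → ℝ) (hu : Differentiable ℝ u) (a : ℝ) (x v : E) :
    fderiv ℝ (fun y => u (a • y)) x v = a * fderiv ℝ u (a • x) v := by
  have h : (fun y : E => u (a • y)) = u ∘ (a • (ContinuousLinearMap.id ℝ E)) := rfl
  rw [h, fderiv_comp x (hu _) (a • (ContinuousLinearMap.id ℝ E)).differentiableAt]
  rw [(a • ContinuousLinearMap.id ℝ E).fderiv]
  simp [smul_smul, mul_comm]

lemma diff_scale (u : E → ℝ) (hu : ContDiff ℝ (⊤ : ℕ∞) u) (c a : ℝ) :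
    ContDiff ℝ (⊤ : ℕ∞) (fun y : E => c * u (a • y)) :=
  contDiff_const.mul (hu.comp (contDiff_const_smul a))

lemma lap_scale (u : E → ℝ) (hu : ContDiff ℝ (⊤ : ℕ∞) u) (c a : ℝ) (x : E) :
    lap (fun y => c * u (a • y)) x = (c * a ^ 2) * lap u (a • x) := by
  unfold lap
  rw [Finset.mul_sum]
  refine Finset.sum_congr rfl fun i _ => ?_
  set v : E := EuclideanSpace.single i 1 with hv
  have hud := hu.differentiable (by simp)
  have hus : Differentiable ℝ (fun z : E => u (a • z)) :=
    hud.comp (differentiable_id.const_smul a)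
  have hgd : Differentiable ℝ (fun w => fderiv ℝ u w v) :=
    (contDiff_dapply u hu v).differentiable (by simp)
  have hgs : Differentiable ℝ (fun y : E => (fun w => fderiv ℝ u w v) (a • y)) :=
    hgd.comp (differentiable_id.const_smul a)
  have key1 : ∀ y : E, fderiv ℝ (fun z => c * u (a • z)) y v
      = (c * a) * (fun w => fderiv ℝ u w v) (a • y) := by
    intro y
    rw [fderiv_const_mul (hus.differentiableAt)]
    simp only [ContinuousLinearMap.smul_apply, smul_eq_mul]
    rw [fderiv_scale u hud a y v]
    ring
  rw [show (fun y : E => fderiv ℝ (fun z => c * u (a • z)) y v)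
      = (fun y : E => (c * a) * (fun w => fderiv ℝ u w v) (a • y)) from funext key1]
  rw [fderiv_const_mul (hgs.differentiableAt)]
  simp only [ContinuousLinearMap.smul_apply, smul_eq_mul]
  rw [fderiv_scale _ hgd a x v]
  ring

lemma lap_lap_scale (u : E → ℝ) (hu : ContDiff ℝ (⊤ : ℕ∞) u) (c a : ℝ) (x : E) :
    lap (lap (fun y => c * u (a • y))) x = (c * a ^ 4) * lap (lap u) (a • x) := by
  have hlap : ContDiff ℝ (⊤ : ℕ∞) (lap u) := by
    unfold lap
    exact ContDiff.sum fun i _ => contDiff_dapply _ (contDiff_dapply u hu _) _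
  have h1 : lap (fun y => c * u (a • y)) = fun w => (c * a ^ 2) * lap u (a • w) :=
    funext fun w => lap_scale u hu c a w
  rw [h1, lap_scale (lap u) hlap (c * a ^ 2) a x]
  ring

/-- self-similar reduction. If `f` is smooth and satisfies the
profile equation `f² Δ²(f³) − β ⟨y, ∇f⟩ + α f = 0` with `α = (4β−1)/4`, then
`ρ(x,t) = t^α f(t^{−β} x)` solves `∂ₜρ + ρ² Δ²((ρ(·,t))³) = 0` for `t > 0`. -/
theorem stmt_6 (N : ℕ) (hN : 1 ≤ N) (β α : ℝ) (hα : α = (4 * β - 1) / 4)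
    (f : EuclideanSpace ℝ (Fin N) → ℝ) (hf : ContDiff ℝ (⊤ : ℕ∞) f)
    (hfeq : ∀ y : EuclideanSpace ℝ (Fin N),
      f y ^ 2 * lap (lap (fun z => f z ^ 3)) y - β * ⟪y, gradient f y⟫
        + α * f y = 0) :
    ∀ (x : EuclideanSpace ℝ (Fin N)) (t : ℝ), 0 < t →
      deriv (fun s : ℝ => s ^ α * f (s ^ (-β) • x)) t
        + (t ^ α * f (t ^ (-β) • x)) ^ 2
          * lap (lap (fun y => (t ^ α * f (t ^ (-β) • y)) ^ 3)) x = 0 := by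
  intro x t ht
  have ht0 : t ≠ 0 := ht.ne'
  set a : ℝ := t ^ (-β) with ha
  set y : EuclideanSpace ℝ (Fin N) := a • x with hy
  -- derivative computation
  have h1 : HasDerivAt (fun s : ℝ => s ^ α) (α * t ^ (α - 1)) t := by
    simpa [mul_comm] using Real.hasDerivAt_rpow_const (x := t) (p := α) (Or.inl ht0)
  have h2 : HasDerivAt (fun s : ℝ => s ^ (-β) • x) ((-β * t ^ (-β - 1)) • x) t := by
    simpa [mul_comm] using
      (Real.hasDerivAt_rpow_const (x := t) (p := -β) (Or.inl ht0)).smul_const x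
  have h3 : HasDerivAt (fun s : ℝ => f (s ^ (-β) • x))
      (fderiv ℝ f y ((-β * t ^ (-β - 1)) • x)) t :=
    ((hf.differentiable (by simp)) y).hasFDerivAt.comp_hasDerivAt t h2
  have h4 : HasDerivAt (fun s : ℝ => s ^ α * f (s ^ (-β) • x))
      (α * t ^ (α - 1) * f y + t ^ α * fderiv ℝ f y ((-β * t ^ (-β - 1)) • x)) t :=
    h1.mul h3
  rw [h4.deriv]
  -- Laplacian scaling
  have hfun : (fun z : EuclideanSpace ℝ (Fin N) => (t ^ α * f (t ^ (-β) • z)) ^ 3)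
      = fun z => (t ^ α) ^ 3 * (fun w => f w ^ 3) (a • z) := by
    funext z; simp [ha]; ring
  rw [hfun, lap_lap_scale (fun w => f w ^ 3) (hf.pow 3) _ _ x]
  -- notation
  set A : ℝ := f y with hA
  set L : ℝ := fderiv ℝ f y x with hL
  set B : ℝ := lap (lap (fun w => f w ^ 3)) y with hB
  have hmap : fderiv ℝ f y ((-β * t ^ (-β - 1)) • x) = (-β * t ^ (-β - 1)) * L := by
    rw [map_smul]; simp [hL]
  have hgrad : ⟪y, gradient f y⟫ = a * L := by
    rw [real_inner_comm]
    have h5 : ⟪gradient f y, y⟫ = fderiv ℝ f y y := by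
      simp [gradient, InnerProductSpace.toDual_symm_apply]
    rw [h5, hy, map_smul]; simp [hL, hy]
  have E1 : A ^ 2 * B - β * (a * L) + α * A = 0 := by
    have := hfeq y; rw [hgrad] at this; exact this
  have e1 : (t ^ α : ℝ) ^ 2 * ((t ^ α) ^ 3 * a ^ 4) = t ^ (α - 1) := by
    rw [ha, ← Real.rpow_natCast (t ^ α) 2, ← Real.rpow_natCast (t ^ α) 3,
      ← Real.rpow_natCast (t ^ (-β)) 4, ← Real.rpow_mul ht.le, ← Real.rpow_mul ht.le,
      ← Real.rpow_mul ht.le, ← Real.rpow_add ht, ← Real.rpow_add ht]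
    congr 1; push_cast; linarith
  have e2 : t ^ α * t ^ (-β - 1) = t ^ (α - 1) * a := by
    rw [ha, ← Real.rpow_add ht, ← Real.rpow_add ht]
    congr 1; ring
  rw [hmap]
  linear_combination t ^ (α - 1) * E1 - β * L * e2 + A ^ 2 * B * e1
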